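/- Let H be a quasi-Hopf algebra and t ∈ H a left integral. Then for all h ∈ H, ∑ h X¹t₁ ⊗ S(X²t₂)α X³ = ∑ X¹t₁ ⊗ S(X²t₂)α X³ h, where Φ = ∑ X¹⊗X²⊗X³. -/

import Mathlib

set_option autoImplicit false

open TensorProduct

/-- A quasi-bialgebra in the sense of Drinfeld. The reassociator `Phi` lives in
`H ⊗ (H ⊗ H)`, and `(Δ ⊗ id)` is transported along the associator. -/
structure QuasiBialgebra (k H : Type*) [Field k] [Ring H] [Algebra k H] where
  comul : H →ₐ[k] H ⊗[k] H
  counit : H →ₐ[k] k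
  Phi : H ⊗[k] (H ⊗[k] H)
  PhiInv : H ⊗[k] (H ⊗[k] H)
  Phi_invertible : Phi * PhiInv = 1
  invertible_Phi : PhiInv * Phi = 1
  quasi_coassoc : ∀ h : H,
    (Algebra.TensorProduct.map (AlgHom.id k H) comul) (comul h) * Phi
      = Phi * (Algebra.TensorProduct.assoc k k k H H H)
          ((Algebra.TensorProduct.map comul (AlgHom.id k H)) (comul h))
  counit_right : ∀ h : H,
    (Algebra.TensorProduct.map (AlgHom.id k H) counit) (comul h) = h ⊗ₜ[k] 1
  counit_left : ∀ h : H,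
    (Algebra.TensorProduct.map counit (AlgHom.id k H)) (comul h) = 1 ⊗ₜ[k] h
  pentagon :
    (1 ⊗ₜ[k] Phi)
      * (Algebra.TensorProduct.map (AlgHom.id k H)
          ((Algebra.TensorProduct.assoc k k k H H H).toAlgHom.comp
            (Algebra.TensorProduct.map comul (AlgHom.id k H)))) Phi
      * (Algebra.TensorProduct.map (AlgHom.id k H)
            (Algebra.TensorProduct.assoc k k k H H H).toAlgHom)
          ((Algebra.TensorProduct.assoc k k k H (H ⊗[k] H) H) (Phi ⊗ₜ[k] 1))
    = (Algebra.TensorProduct.map (AlgHom.id k H)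
        (Algebra.TensorProduct.map (AlgHom.id k H) comul)) Phi
      * (Algebra.TensorProduct.assoc k k k H H (H ⊗[k] H))
          ((Algebra.TensorProduct.map comul (AlgHom.id k (H ⊗[k] H))) Phi)
  counit_mid_Phi :
    (Algebra.TensorProduct.map (AlgHom.id k H)
      (Algebra.TensorProduct.map counit (AlgHom.id k H))) Phi = 1

/-- A quasi-Hopf algebra: a quasi-bialgebra with an algebra anti-homomorphism `S`
and elements `alpha`, `beta` satisfying Drinfeld's antipode axioms.  Bijectivity
of `S` is *not* assumed. -/
structure QuasiHopfAlgebra (k H : Type*) [Field k] [Ring H] [Algebra k H] extends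
    QuasiBialgebra k H where
  S : H →ₗ[k] H
  alpha : H
  beta : H
  S_one : S 1 = 1
  S_mul : ∀ a b : H, S (a * b) = S b * S a
  antipode_left : ∀ h : H,
    (LinearMap.mul' k H)
      ((TensorProduct.map ((LinearMap.mulRight k alpha) ∘ₗ S) LinearMap.id) (comul h))
      = counit h • alpha
  antipode_right : ∀ h : H,
    (LinearMap.mul' k H)
      ((TensorProduct.map LinearMap.id ((LinearMap.mulLeft k beta) ∘ₗ S)) (comul h))
      = counit h • beta
  antipode_Phi :
    (LinearMap.mul' k H)
      ((TensorProduct.map LinearMap.id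
        ((LinearMap.mul' k H) ∘ₗ (TensorProduct.map
          ((LinearMap.mulRight k alpha) ∘ₗ ((LinearMap.mulLeft k beta) ∘ₗ S))
          LinearMap.id))) Phi) = 1
  antipode_PhiInv :
    (LinearMap.mul' k H)
      ((TensorProduct.map ((LinearMap.mulRight k alpha) ∘ₗ S)
        ((LinearMap.mul' k H) ∘ₗ (TensorProduct.map (LinearMap.mulRight k beta) S)))
        PhiInv) = 1

namespace QuasiHopfAlgebra

variable {k H : Type*} [Field k] [Ring H] [Algebra k H] (Q : QuasiHopfAlgebra k H)

/-- The space of left integrals in `H`. -/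
def leftIntegrals : Submodule k H where
  carrier := {t | ∀ h : H, h * t = Q.counit h • t}
  add_mem' := by intro a b ha hb h; rw [mul_add, ha h, hb h, smul_add]
  zero_mem' := by intro h; simp
  smul_mem' := by intro c x hx h; rw [mul_smul_comm, hx h, smul_comm]

/-- The space of right integrals in `H`. -/
def rightIntegrals : Submodule k H where
  carrier := {t | ∀ h : H, t * h = Q.counit h • t}
  add_mem' := by intro a b ha hb h; rw [add_mul, ha h, hb h, smul_add]
  zero_mem' := by intro h; simp
  smul_mem' := by intro c x hx h; rw [smul_mul_assoc, hx h, smul_comm]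

/-- The element `p_R = ∑ x¹ ⊗ x² β S(x³)`. -/
noncomputable def pR : H ⊗[k] H :=
  (TensorProduct.map LinearMap.id
    ((LinearMap.mul' k H) ∘ₗ (TensorProduct.map (LinearMap.mulRight k Q.beta) Q.S)))
    Q.PhiInv

/-- The element `∑ X¹ t₁ ⊗ S(X² t₂) α X³` built from a (left integral) `t`. -/
noncomputable def Tel (t : H) : H ⊗[k] H :=
  (TensorProduct.map LinearMap.id
    ((LinearMap.mul' k H) ∘ₗ
      (TensorProduct.map ((LinearMap.mulRight k Q.alpha) ∘ₗ Q.S) LinearMap.id)))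
    (Q.Phi * (Algebra.TensorProduct.assoc k k k H H H) (Q.comul t ⊗ₜ[k] 1))

end QuasiHopfAlgebra

/-! Write `q(a ⊗ b) = S(a) α b` (`QuasiHopfAlgebra.sAlphaMul`), so that
`Tel t = (id ⊗ q)(Φ · (Δt ⊗ 1))`. The antipode axiom `q(Δ g) = ε(g) α` makes `id ⊗ q` turn left
multiplication by `(id ⊗ Δ)(Δ h)` into left multiplication by `h ⊗ 1`. Since `t` is a left
integral, `Δt ⊗ h = (Δ ⊗ id)(Δ h) · (Δt ⊗ 1)`, and quasi-coassociativity moves `(Δ ⊗ id)(Δ h)` to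
the left of `Φ` as `(id ⊗ Δ)(Δ h)`. Hence right multiplication of `Φ · (Δt ⊗ 1)` by `1 ⊗ 1 ⊗ h`
is left multiplication by `(id ⊗ Δ)(Δ h)`, and applying `id ⊗ q` to both sides gives the
identity. -/

section

open LinearMap

variable {R A B : Type*} [CommSemiring R] [Semiring A] [Semiring B] [Algebra R A] [Algebra R B]

theorem TensorProduct.mul_tmul_one_eq_map_mulRight (x : A ⊗[R] B) (a : A) :
    x * (a ⊗ₜ[R] 1) = map (mulRight R a) id x := by
  rw [← mulRight_apply (R := R), mulRight_tmul, mulRight_one]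

theorem TensorProduct.mul_one_tmul_eq_map_mulRight (x : A ⊗[R] B) (b : B) :
    x * (1 ⊗ₜ[R] b) = map id (mulRight R b) x := by
  rw [← mulRight_apply (R := R), mulRight_tmul, mulRight_one]

end

namespace QuasiHopfAlgebra

open LinearMap

variable {k H : Type*} [Field k] [Ring H] [Algebra k H] (Q : QuasiHopfAlgebra k H)

theorem map_id_counit_comul (h : H) :
    TensorProduct.map id Q.counit.toLinearMap (Q.comul h) = h ⊗ₜ[k] 1 :=
  Q.counit_right h

theorem map_counit_id_comul (h : H) :
    TensorProduct.map Q.counit.toLinearMap id (Q.comul h) = 1 ⊗ₜ[k] h :=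
  Q.counit_left h

theorem comul_mul_tmul_one_of_mem_leftIntegrals {t : H} (ht : t ∈ Q.leftIntegrals) (h : H) :
    Q.comul h * (t ⊗ₜ[k] 1) = t ⊗ₜ[k] h := by
  have hmul : mulRight k t = toSpanSingleton k H t ∘ₗ Q.counit.toLinearMap :=
    LinearMap.ext fun g => ht g
  rw [TensorProduct.mul_tmul_one_eq_map_mulRight, hmul, ← comp_id id,
    TensorProduct.map_comp, comp_apply, map_counit_id_comul]
  simp

theorem comul_tmul_of_mem_leftIntegrals {t : H} (ht : t ∈ Q.leftIntegrals) (h : H) :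
    Q.comul t ⊗ₜ[k] h
      = Algebra.TensorProduct.map Q.comul (AlgHom.id k H) (Q.comul h) * (Q.comul t ⊗ₜ[k] 1) := by
  simpa using congrArg (Algebra.TensorProduct.map Q.comul (AlgHom.id k H))
    (Q.comul_mul_tmul_one_of_mem_leftIntegrals ht h).symm

theorem phi_mul_assoc_comul_tmul_one_mul {t : H} (ht : t ∈ Q.leftIntegrals) (h : H) :
    Q.Phi * Algebra.TensorProduct.assoc k k k H H H (Q.comul t ⊗ₜ[k] 1) * (1 ⊗ₜ[k] (1 ⊗ₜ[k] h))
      = Algebra.TensorProduct.map (AlgHom.id k H) Q.comul (Q.comul h)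
          * (Q.Phi * Algebra.TensorProduct.assoc k k k H H H (Q.comul t ⊗ₜ[k] 1)) := by
  have hone : (1 ⊗ₜ[k] (1 ⊗ₜ[k] h) : H ⊗[k] (H ⊗[k] H))
      = Algebra.TensorProduct.assoc k k k H H H (1 ⊗ₜ[k] h) := by
    simp [Algebra.TensorProduct.one_def]
  calc Q.Phi * Algebra.TensorProduct.assoc k k k H H H (Q.comul t ⊗ₜ[k] 1)
          * (1 ⊗ₜ[k] (1 ⊗ₜ[k] h))
      _ = Q.Phi * Algebra.TensorProduct.assoc k k k H H H (Q.comul t ⊗ₜ[k] h) := by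
        rw [mul_assoc, hone, ← map_mul, Algebra.TensorProduct.tmul_mul_tmul, mul_one, one_mul]
      _ = Q.Phi * Algebra.TensorProduct.assoc k k k H H H
            (Algebra.TensorProduct.map Q.comul (AlgHom.id k H) (Q.comul h)
              * (Q.comul t ⊗ₜ[k] 1)) := by
        rw [← Q.comul_tmul_of_mem_leftIntegrals ht]
      _ = _ := by
        rw [map_mul, ← mul_assoc, ← Q.quasi_coassoc, mul_assoc]

noncomputable def sAlphaMul : H ⊗[k] H →ₗ[k] H :=
  mul' k H ∘ₗ TensorProduct.map (mulRight k Q.alpha ∘ₗ Q.S) id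

theorem tel_eq (t : H) :
    Q.Tel t = TensorProduct.map id Q.sAlphaMul
      (Q.Phi * Algebra.TensorProduct.assoc k k k H H H (Q.comul t ⊗ₜ[k] 1)) :=
  rfl

@[simp]
theorem sAlphaMul_tmul (a b : H) : Q.sAlphaMul (a ⊗ₜ[k] b) = Q.S a * Q.alpha * b := by
  simp [sAlphaMul]

theorem sAlphaMul_comul (g : H) : Q.sAlphaMul (Q.comul g) = Q.counit g • Q.alpha :=
  Q.antipode_left g

theorem sAlphaMul_mul_tmul (x : H ⊗[k] H) (a b : H) :
    Q.sAlphaMul (x * (a ⊗ₜ[k] b)) = Q.S a * Q.sAlphaMul x * b := by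
  induction x using TensorProduct.induction_on with
  | zero => simp
  | add y z hy hz => rw [add_mul, map_add, hy, hz, map_add, mul_add, add_mul]
  | tmul c d => simp [Q.S_mul, mul_assoc]

theorem sAlphaMul_comul_mul (g : H) (x : H ⊗[k] H) :
    Q.sAlphaMul (Q.comul g * x) = Q.counit g • Q.sAlphaMul x := by
  induction x using TensorProduct.induction_on with
  | zero => simp
  | add y z hy hz => rw [mul_add, map_add, hy, hz, map_add, smul_add]
  | tmul a b =>
    rw [sAlphaMul_mul_tmul, sAlphaMul_comul, sAlphaMul_tmul, mul_smul_comm, smul_mul_assoc]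

theorem map_sAlphaMul_mul_one_tmul_one_tmul (x : H ⊗[k] (H ⊗[k] H)) (h : H) :
    TensorProduct.map id Q.sAlphaMul (x * (1 ⊗ₜ[k] (1 ⊗ₜ[k] h)))
      = TensorProduct.map id (mulRight k h) (TensorProduct.map id Q.sAlphaMul x) := by
  have hq : Q.sAlphaMul ∘ₗ mulRight k (1 ⊗ₜ[k] h) = mulRight k h ∘ₗ Q.sAlphaMul :=
    LinearMap.ext fun y => by simp [sAlphaMul_mul_tmul, Q.S_one]
  rw [TensorProduct.mul_one_tmul_eq_map_mulRight, ← comp_apply, ← TensorProduct.map_comp,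
    hq, TensorProduct.map_comp, comp_apply]

theorem map_sAlphaMul_comul_comul_mul (h : H) (x : H ⊗[k] (H ⊗[k] H)) :
    TensorProduct.map id Q.sAlphaMul
        (Algebra.TensorProduct.map (AlgHom.id k H) Q.comul (Q.comul h) * x)
      = TensorProduct.map (mulLeft k h) id (TensorProduct.map id Q.sAlphaMul x) := by
  induction x using TensorProduct.induction_on with
  | zero => simp
  | add y z hy hz => rw [mul_add, map_add, hy, hz, map_add, map_add]
  | tmul a y =>
    have hq : Q.sAlphaMul ∘ₗ mulRight k y ∘ₗ Q.comul.toLinearMap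
        = toSpanSingleton k H (Q.sAlphaMul y) ∘ₗ Q.counit.toLinearMap :=
      LinearMap.ext fun g => by simp [sAlphaMul_comul_mul]
    calc TensorProduct.map id Q.sAlphaMul
          (Algebra.TensorProduct.map (AlgHom.id k H) Q.comul (Q.comul h) * (a ⊗ₜ[k] y))
      _ = TensorProduct.map id Q.sAlphaMul (TensorProduct.map (mulRight k a) (mulRight k y)
            (TensorProduct.map id Q.comul.toLinearMap (Q.comul h))) := by
          rw [← mulRight_apply (R := k), mulRight_tmul]
          rfl
      _ = TensorProduct.map (mulRight k a)
            (Q.sAlphaMul ∘ₗ mulRight k y ∘ₗ Q.comul.toLinearMap) (Q.comul h) := by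
          simp only [← comp_apply, ← TensorProduct.map_comp, id_comp, comp_id]
      _ = (h * a) ⊗ₜ[k] Q.sAlphaMul y := by
          rw [hq, ← comp_id (mulRight k a), TensorProduct.map_comp, comp_apply,
            map_id_counit_comul]
          simp
      _ = _ := by simp

end QuasiHopfAlgebra

theorem left_integral_tensor_identity {k H : Type*} [Field k] [Ring H] [Algebra k H]
    (Q : QuasiHopfAlgebra k H) (t : H) (ht : t ∈ Q.leftIntegrals) (h : H) :
    (TensorProduct.map (LinearMap.mulLeft k h) LinearMap.id) (Q.Tel t)
      = (TensorProduct.map LinearMap.id (LinearMap.mulRight k h)) (Q.Tel t) := by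
  rw [Q.tel_eq, ← Q.map_sAlphaMul_comul_comul_mul, ← Q.phi_mul_assoc_comul_tmul_one_mul ht,
    Q.map_sAlphaMul_mul_one_tmul_one_tmul]
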